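/- arXiv:2203.12475 — 2 statements merged into one kernel-verified Lean document; each statement's English description precedes it below -/
import Mathlib

section
/- For every s ∈ ℂ with 0 < Re(s) < 1 and every real x > 0, if ζ(s) = 0 then x^{s-1} · (∑_{n ≤ x} n^{-s}) − 1/(1−s) = −ψ(x)·x^{-1} + s·x^{s-1}·∫_x^∞ ψ(t)·t^{-s-1} dt, where ψ(t) = {t} − 1/2 is the sawtooth function and {t} denotes the fractional part of t. -/
/-!
Abel summation against the counting function `⌊t⌋₊ + 1 = t + 1/2 - ψ(t)`, followed by one
integration by parts, is the first-order Euler–Maclaurin formula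
`∑_{a < k ≤ b} f(k) = ∫_a^b f + ψ(a) f(a) - ψ(b) f(b) + ∫_a^b ψ f'`.
For `f(t) = t^{-s}`, `b = N → ∞` and `Re s > 1` it gives
`ζ(s) = ∑_{n ≤ x} n^{-s} - x^{1-s}/(1-s) + ψ(x) x^{-s} - s ∫_x^∞ ψ(t) t^{-s-1} dt`.
The integral is the Mellin transform of a bounded function, hence holomorphic in `Re s > 0`, and
after multiplication by `s - 1` both sides are holomorphic on the whole (convex) half-plane, so the
identity theorem extends the formula to `Re s > 0`, `s ≠ 1`. At a zero of `ζ` it remains to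
multiply by `x^{s-1}`.
-/

open MeasureTheory Complex Set Filter Topology

noncomputable def sawtooth (t : ℝ) : ℝ := Int.fract t - 1 / 2

lemma abs_sawtooth_le (t : ℝ) : |sawtooth t| ≤ 1 / 2 := by
  rw [sawtooth, abs_le]
  constructor <;> linarith [Int.fract_nonneg t, Int.fract_lt_one t]

lemma norm_sawtooth_le (t : ℝ) : ‖(sawtooth t : ℂ)‖ ≤ 1 / 2 := by
  simpa only [norm_real, Real.norm_eq_abs] using abs_sawtooth_le t

@[fun_prop]
lemma measurable_sawtooth : Measurable sawtooth :=
  measurable_fract.sub_const _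

lemma sawtooth_eq_sub_natFloor {t : ℝ} (ht : 0 ≤ t) : sawtooth t = t - ⌊t⌋₊ - 1 / 2 := by
  rw [sawtooth, Int.fract, natCast_floor_eq_intCast_floor ht]

lemma sawtooth_natCast (n : ℕ) : sawtooth n = -1 / 2 := by
  rw [sawtooth, Int.fract_natCast]
  norm_num

section EulerMaclaurin

variable {𝕜 : Type*} [RCLike 𝕜]

theorem sum_Ioc_floor_eq_integral_add_sawtooth {f : ℝ → 𝕜} {a b : ℝ} (ha : 0 ≤ a) (hab : a ≤ b)
    (hf_diff : ∀ t ∈ Icc a b, DifferentiableAt ℝ f t) (hf_int : IntegrableOn (deriv f) (Icc a b)) :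
    ∑ k ∈ Finset.Ioc ⌊a⌋₊ ⌊b⌋₊, f k = (∫ t in a..b, f t) + sawtooth a * f a - sawtooth b * f b
      + ∫ t in a..b, sawtooth t * deriv f t := by
  have habel := sum_mul_eq_sub_sub_integral_mul (fun _ ↦ (1 : 𝕜)) ha hab hf_diff hf_int
  simp only [mul_one, Finset.sum_const, Nat.card_Icc, Nat.sub_zero, nsmul_eq_mul] at habel
  have hf'_int : IntervalIntegrable (deriv f) volume a b :=
    (intervalIntegrable_iff_integrableOn_Icc_of_le hab).2 hf_int
  have hparts : ∫ t in a..b, ((t : 𝕜) + 1 / 2) * deriv f t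
      = (b + 1 / 2) * f b - (a + 1 / 2) * f a - ∫ t in a..b, f t := by
    have := intervalIntegral.integral_mul_deriv_eq_deriv_mul (u := fun t : ℝ ↦ (t : 𝕜) + 1 / 2)
      (u' := fun _ ↦ 1) (v := f) (a := a) (b := b) (fun t _ ↦ ?_) (fun t ht ↦ ?_)
      intervalIntegrable_const hf'_int
    · simpa using this
    · simpa using (RCLike.ofRealCLM (K := 𝕜)).hasDerivAt.add_const (1 / 2 : 𝕜)
    · rw [uIcc_of_le hab] at ht
      exact (hf_diff t ht).hasDerivAt
  have hfloor : ∫ t in Ioc a b, deriv f t * ((⌊t⌋₊ + 1 : ℕ) : 𝕜)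
      = (∫ t in a..b, ((t : 𝕜) + 1 / 2) * deriv f t) - ∫ t in a..b, sawtooth t * deriv f t := by
    rw [← intervalIntegral.integral_of_le hab, ← intervalIntegral.integral_sub]
    · refine intervalIntegral.integral_congr fun t ht ↦ ?_
      rw [uIcc_of_le hab] at ht
      simp only [sawtooth_eq_sub_natFloor (ha.trans ht.1)]
      push_cast
      ring
    · exact hf'_int.continuousOn_mul (by fun_prop)
    · refine (intervalIntegrable_iff_integrableOn_Ioc_of_le hab).2 <|
        (hf_int.mono_set Ioc_subset_Icc_self).bdd_mul (c := 1 / 2) (by fun_prop) <|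
          ae_of_all _ fun t ↦ ?_
      simpa only [RCLike.norm_ofReal] using abs_sawtooth_le t
  rw [habel, hfloor, hparts, sawtooth_eq_sub_natFloor ha, sawtooth_eq_sub_natFloor (ha.trans hab)]
  push_cast
  ring

end EulerMaclaurin

lemma hasDerivAt_ofReal_cpow_neg {t : ℝ} (ht : t ≠ 0) (s : ℂ) :
    HasDerivAt (fun y : ℝ ↦ (y : ℂ) ^ (-s)) (-s * (t : ℂ) ^ (-s - 1)) t := by
  rcases eq_or_ne s 0 with rfl | hs
  · simpa using hasDerivAt_const t (1 : ℂ)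
  · exact hasDerivAt_ofReal_cpow_const ht (neg_ne_zero.2 hs)

theorem sum_Ioc_floor_cpow_neg {a b : ℝ} (ha : 0 < a) (hab : a ≤ b) {s : ℂ} (hs : s ≠ 1) :
    ∑ k ∈ Finset.Ioc ⌊a⌋₊ ⌊b⌋₊, (k : ℂ) ^ (-s) =
      ((b : ℂ) ^ (1 - s) - (a : ℂ) ^ (1 - s)) / (1 - s) + sawtooth a * (a : ℂ) ^ (-s)
        - sawtooth b * (b : ℂ) ^ (-s) - s * ∫ t in a..b, (sawtooth t : ℂ) * (t : ℂ) ^ (-s - 1) := by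
  have hpos : ∀ t ∈ Icc a b, t ≠ 0 := fun t ht ↦ (ha.trans_le ht.1).ne'
  have hderiv : EqOn (deriv fun y : ℝ ↦ (y : ℂ) ^ (-s)) (fun t ↦ -s * (t : ℂ) ^ (-s - 1))
      (Icc a b) :=
    fun t ht ↦ (hasDerivAt_ofReal_cpow_neg (hpos t ht) s).deriv
  have hcont : ContinuousOn (fun t : ℝ ↦ -s * (t : ℂ) ^ (-s - 1)) (Icc a b) := fun t ht ↦
    ((continuousAt_ofReal_cpow_const _ _ (Or.inr (hpos t ht))).const_mul _).continuousWithinAt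
  simp only [← ofReal_natCast]
  rw [sum_Ioc_floor_eq_integral_add_sawtooth ha.le hab
      (fun t ht ↦ (hasDerivAt_ofReal_cpow_neg (hpos t ht) s).differentiableAt)
      (hcont.integrableOn_Icc.congr_fun hderiv.symm measurableSet_Icc),
    RCLike.ofReal_eq_complex_ofReal,
    integral_cpow (Or.inr ⟨by simpa [neg_eq_iff_eq_neg] using hs, by
      rw [uIcc_of_le hab]; exact fun h ↦ hpos 0 h rfl⟩),
    intervalIntegral.integral_congr (g := fun t ↦ -s * ((sawtooth t : ℂ) * (t : ℂ) ^ (-s - 1)))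
      fun t ht ↦ by rw [uIcc_of_le hab] at ht; simp only [hderiv ht]; ring,
    intervalIntegral.integral_const_mul, neg_add_eq_sub]
  ring

section BoundedWeight

variable {f : ℝ → ℂ} {C : ℝ}

lemma integrableOn_Ioi_mul_cpow_of_bounded (hf : AEStronglyMeasurable f) (hfC : ∀ t, ‖f t‖ ≤ C)
    {x : ℝ} (hx : 0 < x) {w : ℂ} (hw : w.re < -1) :
    IntegrableOn (fun t : ℝ ↦ f t * (t : ℂ) ^ w) (Ioi x) :=
  (integrableOn_Ioi_cpow_of_lt hw hx).bdd_mul hf.restrict (ae_of_all _ hfC)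

lemma differentiableAt_integral_Ioi_mul_cpow (hf : AEStronglyMeasurable f) (hfC : ∀ t, ‖f t‖ ≤ C)
    {x : ℝ} (hx : 0 < x) {s : ℂ} (hs : 0 < s.re) :
    DifferentiableAt ℂ (fun z : ℂ ↦ ∫ t in Ioi x, f t * (t : ℂ) ^ (-z - 1)) s := by
  set g := (Ioi x).indicator f
  have hg_mellin :
      (fun z : ℂ ↦ ∫ t in Ioi x, f t * (t : ℂ) ^ (-z - 1)) = fun z ↦ mellin g (-z) := by
    ext z
    rw [mellin, ← integral_indicator measurableSet_Ioi, ← integral_indicator measurableSet_Ioi]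
    congr 1 with t
    simp only [g, indicator_apply, mem_Ioi, smul_eq_mul]
    split_ifs <;> first | (exfalso; linarith) | ring
  have hgC : ∀ t, ‖g t‖ ≤ ‖C‖ := fun t ↦ by
    by_cases ht : t ∈ Ioi x
    · simpa [g, ht] using (hfC t).trans (le_abs_self C)
    · simp [g, ht]
  have hg_loc : LocallyIntegrableOn g (Ioi 0) :=
    ((locallyIntegrable_const C).mono (hf.indicator measurableSet_Ioi)
      (ae_of_all _ hgC)).locallyIntegrableOn _
  have hg_top : g =O[atTop] (· ^ (-(0 : ℝ))) :=
    Asymptotics.IsBigO.of_bound ‖C‖ (Eventually.of_forall fun t ↦ by simpa using hgC t)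
  have hg_bot : g =O[𝓝[>] 0] (· ^ (-(-s.re - 1))) := by
    refine EventuallyEq.trans_isBigO ?_ (Asymptotics.isBigO_zero _ _)
    filter_upwards [Ioo_mem_nhdsGT hx] with t ht
    exact indicator_of_notMem (notMem_Ioi.2 ht.2.le) f
  rw [hg_mellin]
  exact (mellin_differentiableAt_of_isBigO_rpow hg_loc hg_top (by simpa using hs) hg_bot
    (by simp)).comp s differentiableAt_id.neg

end BoundedWeight

lemma tendsto_natCast_cpow_nhds_zero {w : ℂ} (hw : w.re < 0) :
    Tendsto (fun n : ℕ ↦ (n : ℂ) ^ w) atTop (𝓝 0) := by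
  rw [tendsto_zero_iff_norm_tendsto_zero]
  simp only [norm_natCast_cpow_of_re_ne_zero _ hw.ne]
  simpa [Function.comp_def] using
    (tendsto_rpow_neg_atTop (neg_pos.2 hw)).comp tendsto_natCast_atTop_atTop

lemma tendsto_sum_Icc_cpow_neg_riemannZeta {s : ℂ} (hs : 1 < s.re) :
    Tendsto (fun N : ℕ ↦ ∑ n ∈ Finset.Icc 1 N, (n : ℂ) ^ (-s)) atTop (𝓝 (riemannZeta s)) := by
  have hsum : HasSum (fun n : ℕ ↦ (n : ℂ) ^ (-s)) (riemannZeta s) := by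
    simpa [zeta_eq_tsum_one_div_nat_cpow hs, cpow_neg] using
      (Complex.summable_one_div_nat_cpow.2 hs).hasSum
  refine (hsum.tendsto_sum_nat.comp (tendsto_add_atTop_nat 1)).congr fun N ↦ ?_
  have hs0 : -s ≠ 0 := neg_ne_zero.2 fun h ↦ by norm_num [h] at hs
  rw [Function.comp_apply, Finset.range_eq_Ico, Finset.sum_eq_sum_Ico_succ_bot N.succ_pos,
    Nat.cast_zero, zero_cpow hs0, zero_add, zero_add, Nat.succ_eq_add_one,
    Finset.Ico_add_one_right_eq_Icc]

theorem riemannZeta_eq_sum_add_integral_sawtooth_of_one_lt_re {x : ℝ} (hx : 0 < x) {s : ℂ}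
    (hs : 1 < s.re) :
    riemannZeta s = ∑ n ∈ Finset.Icc 1 ⌊x⌋₊, (n : ℂ) ^ (-s) - (x : ℂ) ^ (1 - s) / (1 - s)
      + sawtooth x * (x : ℂ) ^ (-s) - s * ∫ t in Ioi x, (sawtooth t : ℂ) * (t : ℂ) ^ (-s - 1) := by
  have hs1 : s ≠ 1 := fun h ↦ by norm_num [h] at hs
  have hIcc (n : ℕ) : Finset.Icc 1 n = Finset.Ioc 0 n := Finset.Icc_add_one_left_eq_Ioc 0 n
  rw [hIcc]
  have hpartial : ∀ᶠ N : ℕ in atTop,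
      ∑ n ∈ Finset.Ioc 0 ⌊x⌋₊, (n : ℂ) ^ (-s) + ((N : ℂ) ^ (1 - s) - (x : ℂ) ^ (1 - s)) / (1 - s)
        + sawtooth x * (x : ℂ) ^ (-s) + 1 / 2 * (N : ℂ) ^ (-s)
        - s * ∫ t in x..N, (sawtooth t : ℂ) * (t : ℂ) ^ (-s - 1)
      = ∑ n ∈ Finset.Ioc 0 N, (n : ℂ) ^ (-s) := by
    filter_upwards [eventually_ge_atTop ⌈x⌉₊] with N hN
    have hxN : x ≤ N := Nat.ceil_le.1 hN
    have hEM := sum_Ioc_floor_cpow_neg hx hxN hs1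
    rw [Nat.floor_natCast, sawtooth_natCast] at hEM
    rw [← Finset.sum_Ioc_consecutive _ (Nat.zero_le _) (Nat.floor_le_of_le hxN), hEM]
    push_cast
    ring
  have hintegral := intervalIntegral_tendsto_integral_Ioi x
    (integrableOn_Ioi_mul_cpow_of_bounded (by fun_prop) norm_sawtooth_le hx (w := -s - 1)
      (by simp only [sub_re, neg_re, one_re]; linarith)) tendsto_natCast_atTop_atTop
  have hpow₁ := tendsto_natCast_cpow_nhds_zero (w := 1 - s)
    (by simp only [sub_re, one_re]; linarith)
  have hpow₀ := tendsto_natCast_cpow_nhds_zero (w := -s) (by simp only [neg_re]; linarith)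
  have hlim := (((((hpow₁.sub_const ((x : ℂ) ^ (1 - s))).div_const (1 - s)).const_add
    (∑ n ∈ Finset.Ioc 0 ⌊x⌋₊, (n : ℂ) ^ (-s))).add_const (sawtooth x * (x : ℂ) ^ (-s))).add
    (hpow₀.const_mul (1 / 2))).sub (hintegral.const_mul s)
  rw [tendsto_nhds_unique (tendsto_sum_Icc_cpow_neg_riemannZeta hs)
    (by simpa only [hIcc] using hlim.congr' hpartial)]
  ring

lemma riemannZeta₁_eq_sub_one_mul {s : ℂ} (hs : s ≠ 1) :
    riemannZeta₁ s = (s - 1) * riemannZeta s := by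
  rw [riemannZeta_eq_inv_sub_mul hs, mul_inv_cancel_left₀ (sub_ne_zero.2 hs)]

theorem riemannZeta_eq_sum_add_integral_sawtooth {x : ℝ} (hx : 0 < x) {s : ℂ} (hs : 0 < s.re)
    (hs1 : s ≠ 1) :
    riemannZeta s = ∑ n ∈ Finset.Icc 1 ⌊x⌋₊, (n : ℂ) ^ (-s) - (x : ℂ) ^ (1 - s) / (1 - s)
      + sawtooth x * (x : ℂ) ^ (-s) - s * ∫ t in Ioi x, (sawtooth t : ℂ) * (t : ℂ) ^ (-s - 1) := by
  let G (z : ℂ) : ℂ := (z - 1) * (∑ n ∈ Finset.Icc 1 ⌊x⌋₊, (n : ℂ) ^ (-z)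
    + sawtooth x * (x : ℂ) ^ (-z) - z * ∫ t in Ioi x, (sawtooth t : ℂ) * (t : ℂ) ^ (-z - 1))
    + (x : ℂ) ^ (1 - z)
  have hU : IsOpen {z : ℂ | 0 < z.re} := isOpen_lt continuous_const continuous_re
  have hG : DifferentiableOn ℂ G {z : ℂ | 0 < z.re} := by
    intro z hz
    have hz0 : -z ≠ 0 := neg_ne_zero.2 fun h ↦ by simp [h] at hz
    have hx0 : (x : ℂ) ≠ 0 := ofReal_ne_zero.2 hx.ne'
    have hI := differentiableAt_integral_Ioi_mul_cpow (by fun_prop) norm_sawtooth_le hx hz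
    refine DifferentiableAt.differentiableWithinAt ?_
    fun_prop (disch := first | exact Or.inr hz0 | exact Or.inl hx0)
  have hζ₁ : EqOn riemannZeta₁ G {z : ℂ | 0 < z.re} := by
    refine AnalyticOnNhd.eqOn_of_preconnected_of_eventuallyEq
      (differentiable_riemannZeta₁.differentiableOn.analyticOnNhd hU) (hG.analyticOnNhd hU)
      (convex_halfSpace_re_gt 0).isPreconnected (z₀ := 2) (by simp) ?_
    filter_upwards [(isOpen_lt continuous_const continuous_re).mem_nhds
      (show (1 : ℝ) < (2 : ℂ).re by simp)] with z hz
    have hz1 : z ≠ 1 := fun h ↦ by norm_num [h] at hz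
    rw [riemannZeta₁_eq_sub_one_mul hz1,
      riemannZeta_eq_sum_add_integral_sawtooth_of_one_lt_re hx hz]
    field_simp [sub_ne_zero.2 hz1, sub_ne_zero.2 hz1.symm]
    ring
  have h := hζ₁ hs
  rw [riemannZeta₁_eq_sub_one_mul hs1] at h
  refine mul_left_cancel₀ (sub_ne_zero.2 hs1) (h.trans ?_)
  field_simp [sub_ne_zero.2 hs1.symm]
  ring

theorem zeta_zero_sawtooth_formula (s : ℂ) (hs0 : 0 < s.re) (hs1 : s.re < 1)
    (x : ℝ) (hx : 0 < x) (hzero : riemannZeta s = 0) :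
    (x : ℂ) ^ (s - 1) * (∑ n ∈ Finset.Icc 1 ⌊x⌋₊, (n : ℂ) ^ (-s)) - 1 / (1 - s)
      = -((Int.fract x - 1/2 : ℝ) : ℂ) * (x : ℂ)⁻¹
        + s * (x : ℂ) ^ (s - 1)
          * ∫ t in Set.Ioi x, ((Int.fract t - 1/2 : ℝ) : ℂ) * (t : ℂ) ^ (-s - 1) := by
  simp only [← sawtooth.eq_1]
  have h := riemannZeta_eq_sum_add_integral_sawtooth hx hs0 fun h ↦ by simp [h] at hs1
  rw [hzero] at h
  have hx0 : (x : ℂ) ≠ 0 := ofReal_ne_zero.2 hx.ne'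
  have hx_inv : (x : ℂ) ^ (s - 1) * (x : ℂ) ^ (-s) = (x : ℂ)⁻¹ := by
    rw [← cpow_add _ _ hx0, show s - 1 + -s = -1 by ring, cpow_neg_one]
  have hx_one : (x : ℂ) ^ (s - 1) * (x : ℂ) ^ (1 - s) = 1 := by
    rw [← cpow_add _ _ hx0, show s - 1 + (1 - s) = 0 by ring, cpow_zero]
  linear_combination -(x : ℂ) ^ (s - 1) * h + hx_one / (1 - s) - (sawtooth x : ℂ) * hx_inv
end

section
/- Let z : ℝ → ℂ be twice continuously differentiable, τ ∈ ℝ, z(τ) = 0, and suppose |z″(t)| ≤ B for all t in [τ, τ+h] with h = |z′(τ)|/B (assume z′(τ) ≠ 0 and B > 0). Then ∫_0^h |z(τ+u)/u|² du ≥ |z′(τ)|·(h·|z′(τ)| − (h²/2)·B) = |z′(τ)|³/(2B). -/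
/-!
Since `z τ = 0`, `z (τ + u) / u` is the slope of `z` between `τ` and `τ + u`. Taylor's theorem
with the sharp remainder `B u² / 2` gives `‖slope‖ ≥ ‖z' τ‖ - B u / 2`, hence
`‖slope‖² ≥ ‖z' τ‖² - ‖z' τ‖ B u`, and integrating this over `[0, h]` gives the bound. The slope
agrees off `u = 0` with the continuous function `dslope`, so it is integrable.
-/

open MeasureTheory Set

section

variable {E : Type*} [NormedAddCommGroup E] [NormedSpace ℝ E] {f : ℝ → E} {a b C x : ℝ}

theorem norm_deriv_sub_deriv_le (hf' : Differentiable ℝ (deriv f))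
    (hC : ∀ y ∈ Icc a b, ‖deriv (deriv f) y‖ ≤ C) (hx : x ∈ Icc a b) :
    ‖deriv f x - deriv f a‖ ≤ C * (x - a) :=
  norm_image_sub_le_of_norm_deriv_le_segment' (fun y _ => (hf' y).hasDerivAt.hasDerivWithinAt)
    (fun y hy => hC y (Ico_subset_Icc_self hy)) x hx

/-- `taylor_mean_remainder_bound` would only give the constant `1 / 1! = 1`; comparing the
remainder with the boundary function `C (y - a)² / 2` gives the sharp constant `1 / 2`. -/
theorem norm_sub_sub_smul_deriv_le (hf : Differentiable ℝ f) (hf' : Differentiable ℝ (deriv f))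
    (hC : ∀ y ∈ Icc a b, ‖deriv (deriv f) y‖ ≤ C) (hx : x ∈ Icc a b) :
    ‖f x - f a - (x - a) • deriv f a‖ ≤ C * (x - a) ^ 2 / 2 := by
  have hremainder : ∀ y, HasDerivAt (fun y => f y - f a - (y - a) • deriv f a)
      (deriv f y - deriv f a) y := fun y => by
    simpa using ((hf y).hasDerivAt.sub_const (f a)).fun_sub
      (((hasDerivAt_id y).sub_const a).smul_const (deriv f a))
  refine image_norm_le_of_norm_deriv_right_le_deriv_boundary
    (fun y _ => (hremainder y).continuousAt.continuousWithinAt)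
    (fun y _ => (hremainder y).hasDerivWithinAt) (by simp)
    (B := fun y => C * (y - a) ^ 2 / 2) (B' := fun y => C * (y - a)) (fun y => ?_)
    (fun y hy => norm_deriv_sub_deriv_le hf' hC (Ico_subset_Icc_self hy)) hx
  exact (((((hasDerivAt_id' y).sub_const a).pow 2).const_mul C).div_const 2).congr_deriv
    (by norm_num; ring)

theorem norm_deriv_sub_le_norm_slope (hf : Differentiable ℝ f) (hf' : Differentiable ℝ (deriv f))
    (hC : ∀ y ∈ Icc a b, ‖deriv (deriv f) y‖ ≤ C) (hax : a < x) (hxb : x ≤ b) :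
    ‖deriv f a‖ - C * (x - a) / 2 ≤ ‖slope f a x‖ := by
  have hxa : 0 < x - a := sub_pos.mpr hax
  have hincrement : ‖f x - f a‖ = (x - a) * ‖slope f a x‖ := by
    rw [← vsub_eq_sub, ← sub_smul_slope, norm_smul, Real.norm_of_nonneg hxa.le]
  have hlinear : (x - a) * ‖deriv f a‖ ≤ (x - a) * ‖slope f a x‖ + C * (x - a) ^ 2 / 2 :=
    calc (x - a) * ‖deriv f a‖ = ‖(x - a) • deriv f a‖ := by
          rw [norm_smul, Real.norm_of_nonneg hxa.le]
      _ ≤ ‖f x - f a‖ + ‖f x - f a - (x - a) • deriv f a‖ := norm_le_insert _ _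
      _ ≤ (x - a) * ‖slope f a x‖ + C * (x - a) ^ 2 / 2 := by
          rw [hincrement]
          gcongr
          exact norm_sub_sub_smul_deriv_le hf hf' hC ⟨hax.le, hxb⟩
  nlinarith

theorem sq_norm_deriv_sub_le_sq_norm_slope (hf : Differentiable ℝ f)
    (hf' : Differentiable ℝ (deriv f)) (hC : ∀ y ∈ Icc a b, ‖deriv (deriv f) y‖ ≤ C)
    (hax : a < x) (hxb : x ≤ b) :
    ‖deriv f a‖ ^ 2 - ‖deriv f a‖ * C * (x - a) ≤ ‖slope f a x‖ ^ 2 := by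
  have hC0 : 0 ≤ C := (norm_nonneg _).trans (hC a ⟨le_rfl, hax.le.trans hxb⟩)
  have hCx : 0 ≤ C * (x - a) := mul_nonneg hC0 (sub_pos.mpr hax).le
  have hslope := norm_deriv_sub_le_norm_slope hf hf' hC hax hxb
  rcases le_or_gt 0 (‖deriv f a‖ - C * (x - a) / 2) with hpos | hneg
  · nlinarith [mul_self_le_mul_self hpos hslope]
  · have : 0 ≤ C * (x - a) - ‖deriv f a‖ := by linarith
    nlinarith [mul_nonneg (norm_nonneg (deriv f a)) this, sq_nonneg ‖slope f a x‖]

theorem intervalIntegrable_sq_norm_slope (hf : Differentiable ℝ f) (h : ℝ) :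
    IntervalIntegrable (fun u => ‖slope f a (a + u)‖ ^ 2) volume 0 h := by
  have hdslope : Continuous (dslope f a) := continuousOn_univ.mp <|
    (continuousOn_dslope Filter.univ_mem).mpr ⟨hf.continuous.continuousOn, hf a⟩
  refine ((hdslope.comp (continuous_const_add a)).norm.pow 2).intervalIntegrable 0 h
    |>.congr_uIoo fun u hu => ?_
  have hu0 : a + u ≠ a := by
    rintro hau
    rw [add_eq_left.mp hau] at hu
    exact left_notMem_uIoo hu
  simp [dslope_of_ne f hu0]

theorem integral_sq_norm_slope_ge (hf : Differentiable ℝ f) (hf' : Differentiable ℝ (deriv f))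
    {h : ℝ} (hh : 0 ≤ h) (hC : ∀ y ∈ Icc a (a + h), ‖deriv (deriv f) y‖ ≤ C) :
    ‖deriv f a‖ * (h * ‖deriv f a‖ - h ^ 2 / 2 * C) ≤ ∫ u in 0..h, ‖slope f a (a + u)‖ ^ 2 := by
  have hlower : Continuous fun u : ℝ => ‖deriv f a‖ ^ 2 - ‖deriv f a‖ * C * u := by fun_prop
  have hintegral : ∫ u in 0..h, (‖deriv f a‖ ^ 2 - ‖deriv f a‖ * C * u) =
      ‖deriv f a‖ * (h * ‖deriv f a‖ - h ^ 2 / 2 * C) := by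
    rw [intervalIntegral.integral_sub intervalIntegrable_const
      ((by fun_prop : Continuous fun u : ℝ => ‖deriv f a‖ * C * u).intervalIntegrable _ _),
      intervalIntegral.integral_const_mul, intervalIntegral.integral_const, integral_id]
    simp only [smul_eq_mul]
    ring
  rw [← hintegral]
  refine intervalIntegral.integral_mono_on_of_le_Ioo hh (hlower.intervalIntegrable _ _)
    (intervalIntegrable_sq_norm_slope hf h) fun u hu => ?_
  simpa using sq_norm_deriv_sub_le_sq_norm_slope hf hf' hC (lt_add_of_pos_right a hu.1)
    (by linarith [hu.2])

end

theorem taylor_quadratic_integral_bound_general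
    (z : ℝ → ℂ) (hz : ContDiff ℝ 2 z) (τ : ℝ) (hzero : z τ = 0)
    (B : ℝ) (hB : 0 < B)
    (h : ℝ) (hh : h = ‖deriv z τ‖ / B)
    (hz'' : ∀ t ∈ Set.Icc τ (τ + h), ‖deriv (deriv z) t‖ ≤ B) :
    (∫ u in (0:ℝ)..h, ‖z (τ + u) / u‖ ^ 2)
        ≥ ‖deriv z τ‖ * (h * ‖deriv z τ‖ - h ^ 2 / 2 * B) ∧
      ‖deriv z τ‖ * (h * ‖deriv z τ‖ - h ^ 2 / 2 * B) = ‖deriv z τ‖ ^ 3 / (2 * B) := by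
  have hslope : ∀ u : ℝ, ‖z (τ + u) / u‖ = ‖slope z τ (τ + u)‖ := fun u => by
    rw [slope_def_module, hzero, sub_zero, add_sub_cancel_left, norm_smul, norm_div, norm_inv,
      Complex.norm_real, div_eq_inv_mul]
  have hz1 : ContDiff ℝ 1 (deriv z) := hz.iterate_deriv' 1 1
  refine ⟨?_, by rw [hh]; field_simp; ring⟩
  simp_rw [hslope]
  exact integral_sq_norm_slope_ge (hz.differentiable two_ne_zero)
    (hz1.differentiable one_ne_zero) (hh ▸ by positivity) hz''

theorem taylor_quadratic_integral_bound
    (z : ℝ → ℂ) (hz : ContDiff ℝ 2 z) (τ : ℝ) (hzero : z τ = 0)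
    (B : ℝ) (hB : 0 < B) (hz' : deriv z τ ≠ 0)
    (h : ℝ) (hh : h = ‖deriv z τ‖ / B)
    (hz'' : ∀ t ∈ Set.Icc τ (τ + h), ‖deriv (deriv z) t‖ ≤ B) :
    (∫ u in (0:ℝ)..h, ‖z (τ + u) / u‖ ^ 2)
        ≥ ‖deriv z τ‖ * (h * ‖deriv z τ‖ - h ^ 2 / 2 * B) ∧
      ‖deriv z τ‖ * (h * ‖deriv z τ‖ - h ^ 2 / 2 * B) = ‖deriv z τ‖ ^ 3 / (2 * B) :=
  taylor_quadratic_integral_bound_general z hz τ hzero B hB h hh hz''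
end
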